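/- Let R be a Noetherian ring, q a central unit of R, (σ, δ) a q-skew derivation on R, and N the prime radical of R, i.e. its largest nilpotent two-sided ideal. Suppose n is a positive integer with N^n = 0 such that {n!}_q is invertible in R. Then δ(N) ⊆ N. -/

import Mathlib

/-- `{n!}_q = ∏_{k=1}^{n} (1 + q + ⋯ + q^{k−1})`. -/
def qFactorial {R : Type*} [Ring R] (q : R) (n : ℕ) : R :=
  ((List.range n).map fun k => ∑ i ∈ Finset.range (k + 1), q ^ i).prod

/-!
The `q`-Leibniz rule `δ^k (a b) = ∑ᵢ [k, i]_q σ^(k-i) (δ^i a) δ^(k-i) b` shows, by induction on `k`,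
that for `x₁, …, x_k ∈ N` the elements `δ^j (x₁ ⋯ x_k)` with `j < k` lie in `N` and
`δ^k (x₁ ⋯ x_k) ≡ {k!}_q σ^(k-1) (δ x₁) ⋯ δ x_k` modulo `N`, because `σ(N) ⊆ N`.
For `k = n` the left side is `δ^n 0 = 0`, so, `{n!}_q` being a unit, `N` contains these twisted
products, and hence (as `σ^(-1)(N) ⊆ N` too) every product `δ x₁ ⋯ δ x_n`. Thus the ideal
`δ(N) + N` has its `n`-th power inside `N`, so it is nilpotent and lies in `N` by maximality.
Both `σ(N)` and `σ^(-1)(N)` are nilpotent ideals, whence `σ(N) = N`.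
-/

theorem RingHom.pow_succ_apply' {R : Type*} [Ring R] (σ : R →+* R) (k : ℕ) (x : R) :
    (σ ^ (k + 1)) x = σ ((σ ^ k) x) := by
  rw [RingHom.coe_pow, RingHom.coe_pow, Function.iterate_succ_apply']

namespace TwoSidedIdeal

variable {R S : Type*} [Ring R] [Ring S]

/-- `J ^ m = 0`, stated on products of `m` elements of `J`. -/
def PowEqZero (J : TwoSidedIdeal R) (m : ℕ) : Prop :=
  ∀ l : List R, l.length = m → (∀ y ∈ l, y ∈ J) → l.prod = 0

theorem PowEqZero.comap {N : TwoSidedIdeal S} {n : ℕ} (hN : N.PowEqZero n) {f : R →+* S}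
    (hf : Function.Injective f) : (N.comap f).PowEqZero n := by
  intro l hl hmem
  apply hf
  rw [map_list_prod, map_zero]
  exact hN _ (by simpa) (by simpa [mem_comap] using hmem)

theorem PowEqZero.mul_of_prod_mem {J N : TwoSidedIdeal R} {m n : ℕ} (hN : N.PowEqZero n)
    (hJ : ∀ l : List R, l.length = m → (∀ y ∈ l, y ∈ J) → l.prod ∈ N) :
    J.PowEqZero (m * n) := by
  suffices ∀ (k : ℕ) (l : List R), l.length = m * k → (∀ y ∈ l, y ∈ J) →
      ∃ l' : List R, l'.length = k ∧ (∀ y ∈ l', y ∈ N) ∧ l.prod = l'.prod by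
    intro l hl hmem
    obtain ⟨l', hl', hmem', hprod⟩ := this n l hl hmem
    rw [hprod, hN l' hl' hmem']
  intro k
  induction k with
  | zero => intro l hl _; exact ⟨[], rfl, by simp, by simp_all⟩
  | succ k ih =>
    intro l hl hmem
    obtain ⟨l', hl', hmem', hprod⟩ := ih (l.drop m) (by simp [hl, Nat.mul_succ])
      fun y hy => hmem y (List.drop_subset _ _ hy)
    refine ⟨(l.take m).prod :: l', by simp [hl'], ?_, ?_⟩
    · simp only [List.mem_cons, forall_eq_or_imp]
      exact ⟨hJ _ (by simp [hl, Nat.mul_succ]) fun y hy => hmem y (List.take_subset _ _ hy),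
        hmem'⟩
    · rw [List.prod_cons, ← hprod, List.prod_take_mul_prod_drop]

theorem list_prod_sub_prod_map_mem (N : TwoSidedIdeal R) (f : R → R) :
    ∀ l : List R, (∀ a ∈ l, a - f a ∈ N) → l.prod - (l.map f).prod ∈ N
  | [], _ => by simp
  | a :: l, h => by
    have split : (a :: l).prod - ((a :: l).map f).prod
        = (a - f a) * l.prod + f a * (l.prod - (l.map f).prod) := by
      simp only [List.prod_cons, List.map_cons]; noncomm_ring
    rw [split]
    exact N.add_mem (N.mul_mem_right _ _ (h a (by simp)))
      (N.mul_mem_left _ _ (list_prod_sub_prod_map_mem N f l fun b hb => h b (by simp [hb])))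

theorem pow_apply_mem {N : TwoSidedIdeal R} {f : R →+* R} (hf : ∀ x ∈ N, f x ∈ N) (k : ℕ)
    {x : R} (hx : x ∈ N) : (f ^ k) x ∈ N := by
  induction k with
  | zero => exact hx
  | succ k ih => rw [RingHom.pow_succ_apply']; exact hf _ ih

theorem mem_of_pow_apply_mem {N : TwoSidedIdeal R} {f : R →+* R} (hf : ∀ x, f x ∈ N → x ∈ N)
    (k : ℕ) {x : R} (hx : (f ^ k) x ∈ N) : x ∈ N := by
  induction k generalizing x with
  | zero => exact hx
  | succ k ih =>
    rw [RingHom.coe_pow, Function.iterate_succ_apply] at hx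
    exact hf _ (ih hx)

end TwoSidedIdeal

section QAnalogues

variable {R : Type*} [Ring R] (q : R)

/-- Gaussian binomial coefficients, by the `q`-Pascal rule with the power of `q` on the right. -/
def qBinom : ℕ → ℕ → R
  | _, 0 => 1
  | 0, _ + 1 => 0
  | m + 1, i + 1 => qBinom m (i + 1) + qBinom m i * q ^ (m - i)

@[simp]
theorem qBinom_zero_right (m : ℕ) : qBinom q m 0 = 1 := by
  cases m <;> rfl

theorem qBinom_succ_succ (m i : ℕ) :
    qBinom q (m + 1) (i + 1) = qBinom q m (i + 1) + qBinom q m i * q ^ (m - i) := rfl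

theorem qBinom_eq_zero_of_lt {m i : ℕ} (h : m < i) : qBinom q m i = 0 := by
  induction m generalizing i with
  | zero => obtain ⟨i, rfl⟩ := Nat.exists_eq_add_one_of_ne_zero (by omega : i ≠ 0); rfl
  | succ m ih =>
    obtain ⟨i, rfl⟩ := Nat.exists_eq_add_one_of_ne_zero (by omega : i ≠ 0)
    rw [qBinom_succ_succ, ih (by omega), ih (by omega), zero_mul, add_zero]

theorem qBinom_one_right (m : ℕ) : qBinom q m 1 = ∑ i ∈ Finset.range m, q ^ i := by
  induction m with
  | zero => rfl
  | succ m ih => rw [qBinom_succ_succ, ih, qBinom_zero_right, one_mul, Nat.sub_zero,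
      Finset.sum_range_succ]

theorem map_qBinom {f : R →+* R} (hf : f q = q) (m i : ℕ) : f (qBinom q m i) = qBinom q m i := by
  induction m generalizing i with
  | zero => cases i <;> simp [qBinom]
  | succ m ih => cases i <;> simp [qBinom, ih, hf]

theorem sum_qBinom_succ (m : ℕ) (T : ℕ → R) :
    ∑ i ∈ Finset.range (m + 1), qBinom q m i * (q ^ (m - i) * T (i + 1) + T i) =
      ∑ i ∈ Finset.range (m + 2), qBinom q (m + 1) i * T i := by
  rw [Finset.sum_range_succ' _ (m + 1)]
  simp only [qBinom_succ_succ, add_mul, mul_add, Finset.sum_add_distrib, qBinom_zero_right,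
    ← mul_assoc]
  have h := Finset.sum_range_succ' (fun i => qBinom q m i * T i) (m + 1)
  rw [Finset.sum_range_succ, qBinom_eq_zero_of_lt q (Nat.lt_succ_self m), zero_mul, add_zero,
    qBinom_zero_right] at h
  rw [h]
  abel

theorem qFactorial_succ (k : ℕ) :
    qFactorial q (k + 1) = qFactorial q k * ∑ i ∈ Finset.range (k + 1), q ^ i := by
  simp [qFactorial, List.range_succ]

theorem qFactorial_mem_center (hq : q ∈ Subsemiring.center R) (k : ℕ) :
    qFactorial q k ∈ Subsemiring.center R :=
  Subsemiring.list_prod_mem _ fun _ h => by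
    obtain ⟨j, -, rfl⟩ := List.mem_map.mp h
    exact sum_mem fun i _ => pow_mem hq i

end QAnalogues

section QSkewDerivation

variable {R : Type*} [Ring R]

structure IsQSkewDerivation (q : R) (σ : R →+* R) (δ : R →+ R) : Prop where
  leibniz : ∀ a b, δ (a * b) = δ a * b + σ a * δ b
  apply_σ : ∀ x, δ (σ x) = q * σ (δ x)
  σ_q : σ q = q
  δ_q : δ q = 0

/-- `σ^{k-1} δ(x₁) · σ^{k-2} δ(x₂) ⋯ δ(x_k)`: the leading term of `δ^k (x₁ ⋯ x_k)`. -/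
def twistedProd (σ : R →+* R) (δ : R →+ R) : List R → R
  | [] => 1
  | x :: xs => (σ ^ xs.length) (δ x) * twistedProd σ δ xs

namespace IsQSkewDerivation

variable {q : R} {σ : R →+* R} {δ : R →+ R} (hd : IsQSkewDerivation q σ δ)
include hd

theorem map_one_eq_zero : δ 1 = 0 := by
  have h := hd.leibniz 1 1
  rwa [mul_one, mul_one, σ.map_one, one_mul, left_eq_add] at h

theorem map_q_pow (k : ℕ) : δ (q ^ k) = 0 := by
  induction k with
  | zero => simpa using hd.map_one_eq_zero
  | succ k ih => rw [pow_succ, hd.leibniz, ih, hd.δ_q, zero_mul, mul_zero, add_zero]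

theorem map_const_mul {c : R} (hσc : σ c = c) (hδc : δ c = 0) (y : R) :
    δ (c * y) = c * δ y := by
  rw [hd.leibniz, hδc, hσc, zero_mul, zero_add]

theorem map_qBinom_eq_zero (m i : ℕ) : δ (qBinom q m i) = 0 := by
  induction m generalizing i with
  | zero => cases i <;> simp [qBinom, hd.map_one_eq_zero]
  | succ m ih => cases i <;> simp [qBinom, ih, hd.map_one_eq_zero, hd.leibniz, hd.map_q_pow]

theorem map_pow_apply (k : ℕ) (x : R) : δ ((σ ^ k) x) = q ^ k * (σ ^ k) (δ x) := by
  induction k with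
  | zero => simp
  | succ k ih =>
    rw [RingHom.pow_succ_apply', hd.apply_σ, ih, map_mul, map_pow, hd.σ_q,
      ← RingHom.pow_succ_apply', ← mul_assoc, ← pow_succ']

theorem iterate_map_mul (m : ℕ) (a b : R) :
    δ^[m] (a * b) =
      ∑ i ∈ Finset.range (m + 1), qBinom q m i * ((σ ^ (m - i)) (δ^[i] a) * δ^[m - i] b) := by
  induction m with
  | zero => simp
  | succ m ih =>
    rw [Function.iterate_succ_apply', ih, map_sum, ← sum_qBinom_succ]
    refine Finset.sum_congr rfl fun i hi => ?_
    have hsub : m + 1 - i = m - i + 1 := by have := Finset.mem_range.mp hi; omega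
    rw [hd.map_const_mul (map_qBinom q hd.σ_q m i) (hd.map_qBinom_eq_zero m i), hd.leibniz,
      hd.map_pow_apply, ← RingHom.pow_succ_apply', hsub, Nat.add_sub_add_right, mul_assoc,
      Function.iterate_succ_apply', Function.iterate_succ_apply']

end IsQSkewDerivation

end QSkewDerivation

section Nilpotent

variable {R : Type*} [Ring R] {q : R} {σ : R →+* R} {δ : R →+ R} {N : TwoSidedIdeal R}

theorem leibniz_term_mem (hσN : ∀ x ∈ N, σ x ∈ N) {x P : R} (hx : x ∈ N) {k : ℕ}
    (hP : ∀ j < k, δ^[j] P ∈ N) {i j : ℕ} (hij : i ≤ j) (hjk : j ≤ k + 1) (h1 : i = 1 → j ≤ k) :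
    qBinom q j i * ((σ ^ (j - i)) (δ^[i] x) * δ^[j - i] P) ∈ N := by
  refine N.mul_mem_left _ _ ?_
  rcases Nat.eq_zero_or_pos i with rfl | hi
  · exact N.mul_mem_right _ _ (N.pow_apply_mem hσN _ hx)
  · exact N.mul_mem_left _ _ (hP _ (by omega))

namespace IsQSkewDerivation

variable (hd : IsQSkewDerivation q σ δ)
include hd

theorem iterate_mul_mem (hσN : ∀ x ∈ N, σ x ∈ N) {x P : R} (hx : x ∈ N) {k : ℕ}
    (hP : ∀ j < k, δ^[j] P ∈ N) {j : ℕ} (hj : j ≤ k) : δ^[j] (x * P) ∈ N := by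
  rw [hd.iterate_map_mul]
  exact N.finsetSum_mem _ _ fun i hi =>
    leibniz_term_mem hσN hx hP (Nat.lt_succ_iff.mp (Finset.mem_range.mp hi)) (by omega) fun _ => hj

theorem iterate_mul_sub_mem (hσN : ∀ x ∈ N, σ x ∈ N) {x P : R} (hx : x ∈ N) {k : ℕ}
    (hP : ∀ j < k, δ^[j] P ∈ N) :
    δ^[k + 1] (x * P) - qBinom q (k + 1) 1 * ((σ ^ k) (δ x) * δ^[k] P) ∈ N := by
  rw [hd.iterate_map_mul, ← Finset.add_sum_erase _ _ (by simp : 1 ∈ Finset.range (k + 2)),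
    Nat.add_sub_cancel, Function.iterate_one, add_sub_cancel_left]
  refine N.finsetSum_mem _ _ fun i hi => ?_
  simp only [Finset.mem_erase, Finset.mem_range] at hi
  exact leibniz_term_mem hσN hx hP (by omega) le_rfl (by omega)

/-- Modulo `N`, only one term of the `q`-Leibniz expansion of `δ^k (x₁ ⋯ x_k)` survives. -/
theorem iterate_list_prod_mem (hσN : ∀ x ∈ N, σ x ∈ N) (hq : q ∈ Subsemiring.center R)
    (l : List R) (hl : ∀ y ∈ l, y ∈ N) :
    (∀ j < l.length, δ^[j] l.prod ∈ N) ∧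
      δ^[l.length] l.prod - qFactorial q l.length * twistedProd σ δ l ∈ N := by
  induction l with
  | nil => simp [twistedProd, qFactorial]
  | cons x xs ih =>
    simp only [List.forall_mem_cons] at hl
    obtain ⟨hP, hlead⟩ := ih hl.2
    simp only [List.length_cons, List.prod_cons]
    refine ⟨fun j hj => hd.iterate_mul_mem hσN hl.1 hP (by omega), ?_⟩
    set k := xs.length
    have hc := Subsemiring.mem_center_iff.mp (qFactorial_mem_center q hq k)
    have key : qBinom q (k + 1) 1 * ((σ ^ k) (δ x) * δ^[k] xs.prod)
          - qFactorial q (k + 1) * twistedProd σ δ (x :: xs)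
        = qBinom q (k + 1) 1 *
          ((σ ^ k) (δ x) * (δ^[k] xs.prod - qFactorial q k * twistedProd σ δ xs)) := by
      rw [twistedProd, qFactorial_succ, ← qBinom_one_right, mul_sub, mul_sub]
      congr 1
      rw [← mul_assoc _ (qFactorial q k), hc, ← mul_assoc, ← hc, mul_assoc, mul_assoc,
        mul_assoc (qFactorial q k)]
    rw [← sub_add_sub_cancel _ (qBinom q (k + 1) 1 * ((σ ^ k) (δ x) * δ^[k] xs.prod)), key]
    exact N.add_mem (hd.iterate_mul_sub_mem hσN hl.1 hP)
      (N.mul_mem_left _ _ (N.mul_mem_left _ _ hlead))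

theorem twistedProd_mem (hσN : ∀ x ∈ N, σ x ∈ N) (hq : q ∈ Subsemiring.center R) {n : ℕ}
    (hN : N.PowEqZero n) (hfac : IsUnit (qFactorial q n)) (l : List R) (hl : l.length = n)
    (hmem : ∀ y ∈ l, y ∈ N) : twistedProd σ δ l ∈ N := by
  have h := (hd.iterate_list_prod_mem hσN hq l hmem).2
  rw [hl, hN l hl hmem, iterate_map_zero, zero_sub, neg_mem_iff] at h
  obtain ⟨u, hu⟩ := hfac
  rw [← Units.inv_mul_cancel_left u (twistedProd σ δ l), hu]
  exact N.mul_mem_left _ _ h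

theorem exists_pow_apply_map_eq (hσ : Function.Surjective σ) (hσN : ∀ x, σ x ∈ N → x ∈ N)
    (k : ℕ) {x : R} (hx : x ∈ N) : ∃ z ∈ N, (σ ^ k) (δ z) = δ x := by
  obtain ⟨w, rfl⟩ := hσ.iterate k x
  have hσq : σ (q ^ k) = q ^ k := by rw [map_pow, hd.σ_q]
  have hσkq : (σ ^ k) (q ^ k) = q ^ k := by
    rw [map_pow, RingHom.coe_pow, Function.iterate_fixed hd.σ_q]
  refine ⟨q ^ k * w, N.mul_mem_left _ _ (N.mem_of_pow_apply_mem hσN k hx), ?_⟩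
  rw [hd.map_const_mul hσq (hd.map_q_pow k), map_mul, hσkq, ← hd.map_pow_apply, RingHom.coe_pow]

theorem exists_twistedProd_eq_prod_map (hσ : Function.Surjective σ)
    (hσN : ∀ x, σ x ∈ N → x ∈ N) (xs : List R) (hxs : ∀ x ∈ xs, x ∈ N) :
    ∃ zs : List R, zs.length = xs.length ∧ (∀ z ∈ zs, z ∈ N) ∧
      twistedProd σ δ zs = (xs.map δ).prod := by
  induction xs with
  | nil => exact ⟨[], rfl, by simp, rfl⟩
  | cons x xs ih =>
    simp only [List.forall_mem_cons] at hxs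
    obtain ⟨zs, hlen, hzs, heq⟩ := ih hxs.2
    obtain ⟨z, hz, hze⟩ := hd.exists_pow_apply_map_eq hσ hσN xs.length hxs.1
    refine ⟨z :: zs, by simp [hlen], List.forall_mem_cons.mpr ⟨hz, hzs⟩, ?_⟩
    rw [twistedProd, hlen, hze, heq, List.map_cons, List.prod_cons]

theorem prod_map_mem (hq : q ∈ Subsemiring.center R) (hσ : Function.Surjective σ)
    (hσN : ∀ x ∈ N, σ x ∈ N) (hσN' : ∀ x, σ x ∈ N → x ∈ N) {n : ℕ} (hN : N.PowEqZero n)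
    (hfac : IsUnit (qFactorial q n)) (xs : List R) (hxs : xs.length = n)
    (hmem : ∀ x ∈ xs, x ∈ N) : (xs.map δ).prod ∈ N := by
  obtain ⟨zs, hlen, hzs, heq⟩ := hd.exists_twistedProd_eq_prod_map hσ hσN' xs hmem
  rw [← heq]
  exact hd.twistedProd_mem hσN hq hN hfac zs (hlen.trans hxs) hzs

/-- The two-sided ideal `δ(N) + N`. -/
def imageSup (hσ : Function.Surjective σ) (hσN : ∀ x ∈ N, σ x ∈ N) : TwoSidedIdeal R :=
  .mk' {a | ∃ x ∈ N, a - δ x ∈ N} ⟨0, N.zero_mem, by simp⟩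
    (fun ⟨x, hx, h⟩ ⟨y, hy, h'⟩ => ⟨x + y, N.add_mem hx hy, by
      rw [map_add, add_sub_add_comm]; exact N.add_mem h h'⟩)
    (fun ⟨x, hx, h⟩ => ⟨-x, N.neg_mem hx, by
      rw [map_neg, neg_sub_neg, ← neg_sub]; exact N.neg_mem h⟩)
    (fun {r a} ⟨x, hx, h⟩ => by
      obtain ⟨s, rfl⟩ := hσ r
      refine ⟨s * x, N.mul_mem_left _ _ hx, ?_⟩
      have e : σ s * a - δ (s * x) = σ s * (a - δ x) - δ s * x := by
        rw [hd.leibniz]; noncomm_ring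
      rw [e]
      exact N.sub_mem (N.mul_mem_left _ _ h) (N.mul_mem_left _ _ hx))
    (fun {a r} ⟨x, hx, h⟩ => by
      refine ⟨x * r, N.mul_mem_right _ _ hx, ?_⟩
      have e : a * r - δ (x * r) = (a - δ x) * r - σ x * δ r := by
        rw [hd.leibniz]; noncomm_ring
      rw [e]
      exact N.sub_mem (N.mul_mem_right _ _ h) (N.mul_mem_right _ _ (hσN x hx)))

theorem mem_imageSup {hσ : Function.Surjective σ} {hσN : ∀ x ∈ N, σ x ∈ N} {a : R} :
    a ∈ hd.imageSup hσ hσN ↔ ∃ x ∈ N, a - δ x ∈ N :=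
  TwoSidedIdeal.mem_mk' _ _ _ _ _ _ a

theorem map_mem_imageSup (hσ : Function.Surjective σ) (hσN : ∀ x ∈ N, σ x ∈ N) {x : R}
    (hx : x ∈ N) : δ x ∈ hd.imageSup hσ hσN :=
  hd.mem_imageSup.mpr ⟨x, hx, by simp⟩

/-- Modulo `N`, a product of elements of `δ(N) + N` is a product of elements of `δ(N)`. -/
theorem prod_mem_of_mem_imageSup (hq : q ∈ Subsemiring.center R) (hσ : Function.Surjective σ)
    (hσN : ∀ x ∈ N, σ x ∈ N) (hσN' : ∀ x, σ x ∈ N → x ∈ N) {n : ℕ} (hN : N.PowEqZero n)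
    (hfac : IsUnit (qFactorial q n)) (l : List R) (hl : l.length = n)
    (hmem : ∀ a ∈ l, a ∈ hd.imageSup hσ hσN) : l.prod ∈ N := by
  choose! x hxN hx using fun a ha => hd.mem_imageSup.mp (hmem a ha)
  have hdiff := N.list_prod_sub_prod_map_mem (δ ∘ x) l hx
  have hlead := hd.prod_map_mem hq hσ hσN hσN' hN hfac (l.map x) (by simp [hl])
    (by simpa using hxN)
  rw [List.map_map] at hlead
  rw [← sub_add_cancel l.prod ((l.map (δ ∘ x)).prod)]
  exact N.add_mem hdiff hlead

end IsQSkewDerivation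

end Nilpotent

theorem stmt_5_general {R : Type*} [Ring R]
    (q : R) (hqc : ∀ r : R, q * r = r * q)
    (σ : R →+* R) (hσ : Function.Bijective σ)
    (δ : R → R) (hδadd : ∀ a b : R, δ (a + b) = δ a + δ b)
    (hleib : ∀ a b : R, δ (a * b) = δ a * b + σ a * δ b)
    (hqskew : ∀ x : R, δ (σ x) = q * σ (δ x)) (hσq : σ q = q) (hδq : δ q = 0)
    (N : TwoSidedIdeal R)
    -- `N` contains every nilpotent two-sided ideal of `R`:
    (hlargest : ∀ (J : TwoSidedIdeal R) (m : ℕ), 0 < m →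
      (∀ l : List R, l.length = m → (∀ y ∈ l, y ∈ J) → l.prod = 0) → J ≤ N)
    (n : ℕ) (hn : 0 < n)
    -- `N^n = 0`:
    (hNn : ∀ l : List R, l.length = n → (∀ y ∈ l, y ∈ N) → l.prod = 0)
    (hfac : IsUnit (qFactorial q n)) :
    ∀ x ∈ N, δ x ∈ N := by
  have hd : IsQSkewDerivation q σ (AddMonoidHom.mk' δ hδadd) := ⟨hleib, hqskew, hσq, hδq⟩
  have hq : q ∈ Subsemiring.center R := Subsemiring.mem_center_iff.mpr fun r => (hqc r).symm
  have hN : N.PowEqZero n := hNn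
  have hσN' : ∀ x, σ x ∈ N → x ∈ N := fun x hx =>
    hlargest _ n hn (hN.comap hσ.1) ((TwoSidedIdeal.mem_comap σ).mpr hx)
  have hσN : ∀ x ∈ N, σ x ∈ N := fun x hx => by
    let e := RingEquiv.ofBijective σ hσ
    refine hlargest _ n hn (hN.comap (f := e.symm.toRingHom) e.symm.injective)
      ((TwoSidedIdeal.mem_comap _).mpr ?_)
    show e.symm (e x) ∈ N
    rwa [e.symm_apply_apply]
  have hI : (hd.imageSup hσ.2 hσN).PowEqZero (n * n) :=
    hN.mul_of_prod_mem (hd.prod_mem_of_mem_imageSup hq hσ.2 hσN hσN' hN hfac)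
  intro x hx
  exact hlargest _ _ (Nat.mul_pos hn hn) hI (hd.map_mem_imageSup hσ.2 hσN hx)

/-- Let `R` be Noetherian, `(σ, δ)` a `q`-skew derivation, and `N` the prime radical of
`R` (its largest nilpotent two-sided ideal).  If `N^n = 0` with `{n!}_q` invertible,
then `δ(N) ⊆ N`. -/
theorem stmt_5 {R : Type*} [Ring R] [IsNoetherianRing R]
    (q : R) (hq : IsUnit q) (hqc : ∀ r : R, q * r = r * q)
    (σ : R →+* R) (hσ : Function.Bijective σ)
    (δ : R → R) (hδadd : ∀ a b : R, δ (a + b) = δ a + δ b)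
    (hleib : ∀ a b : R, δ (a * b) = δ a * b + σ a * δ b)
    (hqskew : ∀ x : R, δ (σ x) = q * σ (δ x)) (hσq : σ q = q) (hδq : δ q = 0)
    (N : TwoSidedIdeal R)
    -- `N` contains every nilpotent two-sided ideal of `R`:
    (hlargest : ∀ (J : TwoSidedIdeal R) (m : ℕ), 0 < m →
      (∀ l : List R, l.length = m → (∀ y ∈ l, y ∈ J) → l.prod = 0) → J ≤ N)
    (n : ℕ) (hn : 0 < n)
    -- `N^n = 0`:
    (hNn : ∀ l : List R, l.length = n → (∀ y ∈ l, y ∈ N) → l.prod = 0)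
    (hfac : IsUnit (qFactorial q n)) :
    ∀ x ∈ N, δ x ∈ N :=
  stmt_5_general q hqc σ hσ δ hδadd hleib hqskew hσq hδq N hlargest n hn hNn hfac
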